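/- Let V be a finite-dimensional real vector space, Π̃ : V* → V and B̃ : V → V* skew-symmetric linear maps. The gauge transform τ_B(L_Π) of the graph L_Π = {(Π̃α, α) : α ∈ V*} is the graph of a skew-symmetric map V* → V if and only if the map id + B̃∘Π̃ : V* → V* is invertible; in that case τ_B(L_Π) is the graph of Π̃∘(id + B̃∘Π̃)⁻¹. -/

import Mathlib

/-!
The gauge transform of the graph `{(Π̃α, α)}` is `{(Π̃α, (id + B̃Π̃)α)}`. If `id + B̃Π̃` is
invertible, reparametrising by `β = (id + B̃Π̃)α` exhibits it as the graph of
`Π̃ (id + B̃Π̃)⁻¹`, which is skew because `β(Π̃γ) = δ(Π̃γ) + B̃(Π̃δ)(Π̃γ)` is antisymmetric in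
`γ, δ` when `β = (id + B̃Π̃)δ`. Conversely, if it is the graph of some `S`, a kernel vector `α`
of `id + B̃Π̃` gives the point `(Π̃α, 0)` of that graph, so `Π̃α = S 0 = 0` and then `α = 0`;
in finite dimension injectivity gives invertibility.
-/

/-- The linear map `(X, α) ↦ (X, α + B(X))` on `V ⊕ V*` implementing the gauge
transformation `τ_B`. -/
noncomputable def gaugeMap (V : Type*) [AddCommGroup V] [Module ℝ V]
    (B : V →ₗ[ℝ] Module.Dual ℝ V) :
    V × Module.Dual ℝ V →ₗ[ℝ] V × Module.Dual ℝ V :=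
  (LinearMap.fst ℝ V (Module.Dual ℝ V)).prod
    (LinearMap.snd ℝ V (Module.Dual ℝ V) + B ∘ₗ LinearMap.fst ℝ V (Module.Dual ℝ V))

section Graph

variable {R M N : Type*} [CommRing R] [AddCommGroup M] [Module R M]
  [AddCommGroup N] [Module R N]

theorem LinearMap.ker_le_ker_of_range_prod_le_graph {f : N →ₗ[R] M} {g : N →ₗ[R] N}
    {S : N →ₗ[R] M} (h : range (f.prod g) ≤ range (S.prod id)) : ker g ≤ ker f := by
  intro α hα
  obtain ⟨β, hβ⟩ := h ⟨α, rfl⟩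
  have hβ0 : β = 0 := by simpa [mem_ker.mp hα] using congrArg Prod.snd hβ
  simpa [hβ0] using (congrArg Prod.fst hβ).symm

theorem LinearMap.range_prod_equiv (f : N →ₗ[R] M) (e : N ≃ₗ[R] N) :
    range (f.prod (e : N →ₗ[R] N)) = range ((f ∘ₗ (e.symm : N →ₗ[R] N)).prod id) := by
  have hcomp : f.prod (e : N →ₗ[R] N) = ((f ∘ₗ (e.symm : N →ₗ[R] N)).prod id) ∘ₗ
      (e : N →ₗ[R] N) := by
    ext α <;> simp
  rw [hcomp, range_comp_of_range_eq_top _ e.range]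

theorem LinearMap.injective_id_add_comp_of_ker_le {f : N →ₗ[R] M} {g : M →ₗ[R] N}
    (h : ker ((id : N →ₗ[R] N) + g ∘ₗ f) ≤ ker f) :
    Function.Injective ((id : N →ₗ[R] N) + g ∘ₗ f) := by
  rw [← ker_eq_bot, eq_bot_iff]
  intro α hα
  simpa [mem_ker.mp (h hα)] using mem_ker.mp hα

end Graph

section Skew

variable {R V : Type*} [CommRing R] [AddCommGroup V] [Module R V]
  {P : Module.Dual R V →ₗ[R] V} {B : V →ₗ[R] Module.Dual R V}

theorem apply_add_gauge_apply_skew (hP : ∀ α β : Module.Dual R V, β (P α) = - α (P β))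
    (hB : ∀ X Y : V, B X Y = - B Y X) (γ δ : Module.Dual R V) :
    (δ + B (P δ)) (P γ) = - (γ + B (P γ)) (P δ) := by
  simp only [LinearMap.add_apply]
  rw [hP γ δ, hB (P δ) (P γ)]
  ring

theorem skew_comp_symm_of_coe_eq_id_add (hP : ∀ α β : Module.Dual R V, β (P α) = - α (P β))
    (hB : ∀ X Y : V, B X Y = - B Y X) (e : Module.Dual R V ≃ₗ[R] Module.Dual R V)
    (he : (e : Module.Dual R V →ₗ[R] Module.Dual R V) = LinearMap.id + B ∘ₗ P)
    (α β : Module.Dual R V) : β (P (e.symm α)) = - α (P (e.symm β)) := by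
  have hinv : ∀ γ, γ = e.symm γ + B (P (e.symm γ)) := fun γ => by
    simpa using LinearMap.congr_fun he (e.symm γ)
  conv_lhs => rw [hinv β]
  conv_rhs => rw [hinv α]
  exact apply_add_gauge_apply_skew hP hB _ _

end Skew

theorem gaugeMap_comp_prod_id (V : Type*) [AddCommGroup V] [Module ℝ V]
    (P : Module.Dual ℝ V →ₗ[ℝ] V) (B : V →ₗ[ℝ] Module.Dual ℝ V) :
    gaugeMap V B ∘ₗ P.prod LinearMap.id = P.prod (LinearMap.id + B ∘ₗ P) := by
  ext α <;> simp [gaugeMap]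

theorem map_gaugeMap_range_prod_id (V : Type*) [AddCommGroup V] [Module ℝ V]
    (P : Module.Dual ℝ V →ₗ[ℝ] V) (B : V →ₗ[ℝ] Module.Dual ℝ V) :
    Submodule.map (gaugeMap V B) (LinearMap.range (P.prod LinearMap.id)) =
      LinearMap.range (P.prod (LinearMap.id + B ∘ₗ P)) := by
  rw [← LinearMap.range_comp, gaugeMap_comp_prod_id]

theorem map_gaugeMap_range_prod_id_eq_of_coe_eq (V : Type*) [AddCommGroup V] [Module ℝ V]
    (P : Module.Dual ℝ V →ₗ[ℝ] V) (B : V →ₗ[ℝ] Module.Dual ℝ V)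
    (e : Module.Dual ℝ V ≃ₗ[ℝ] Module.Dual ℝ V)
    (he : (e : Module.Dual ℝ V →ₗ[ℝ] Module.Dual ℝ V) = LinearMap.id + B ∘ₗ P) :
    Submodule.map (gaugeMap V B) (LinearMap.range (P.prod LinearMap.id)) =
      LinearMap.range ((P ∘ₗ (e.symm : Module.Dual ℝ V →ₗ[ℝ] Module.Dual ℝ V)).prod
        LinearMap.id) := by
  rw [map_gaugeMap_range_prod_id, ← he, LinearMap.range_prod_equiv]

/-- The gauge transform `τ_B(L_Π)` of the graph of a skew map `Π̃ : V* → V` by a skew map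
`B̃ : V → V*` is the graph of a skew map `V* → V` iff `id + B̃∘Π̃` is invertible, in which
case it is the graph of `Π̃ ∘ (id + B̃∘Π̃)⁻¹`. -/
theorem stmt_14 (V : Type*) [AddCommGroup V] [Module ℝ V] [FiniteDimensional ℝ V]
    (P : Module.Dual ℝ V →ₗ[ℝ] V) (B : V →ₗ[ℝ] Module.Dual ℝ V)
    (hP : ∀ α β : Module.Dual ℝ V, β (P α) = - α (P β))
    (hB : ∀ X Y : V, B X Y = - B Y X) :
    ((∃ S : Module.Dual ℝ V →ₗ[ℝ] V,
        (∀ α β : Module.Dual ℝ V, β (S α) = - α (S β)) ∧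
        Submodule.map (gaugeMap V B)
            (LinearMap.range
              (P.prod (LinearMap.id : Module.Dual ℝ V →ₗ[ℝ] Module.Dual ℝ V))) =
          LinearMap.range
            (S.prod (LinearMap.id : Module.Dual ℝ V →ₗ[ℝ] Module.Dual ℝ V))) ↔
      Function.Bijective ((LinearMap.id : Module.Dual ℝ V →ₗ[ℝ] Module.Dual ℝ V) + B ∘ₗ P)) ∧
    ∀ e : Module.Dual ℝ V ≃ₗ[ℝ] Module.Dual ℝ V,
      (e : Module.Dual ℝ V →ₗ[ℝ] Module.Dual ℝ V) = (LinearMap.id : Module.Dual ℝ V →ₗ[ℝ] Module.Dual ℝ V) + B ∘ₗ P →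
      Submodule.map (gaugeMap V B)
          (LinearMap.range
            (P.prod (LinearMap.id : Module.Dual ℝ V →ₗ[ℝ] Module.Dual ℝ V))) =
        LinearMap.range
          ((P ∘ₗ (e.symm : Module.Dual ℝ V →ₗ[ℝ] Module.Dual ℝ V)).prod
            (LinearMap.id : Module.Dual ℝ V →ₗ[ℝ] Module.Dual ℝ V)) := by
  refine ⟨⟨?_, ?_⟩, map_gaugeMap_range_prod_id_eq_of_coe_eq V P B⟩
  · rintro ⟨S, -, hS⟩
    rw [map_gaugeMap_range_prod_id] at hS
    have hinj := LinearMap.injective_id_add_comp_of_ker_le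
      (LinearMap.ker_le_ker_of_range_prod_le_graph hS.le)
    exact ⟨hinj, LinearMap.injective_iff_surjective.mp hinj⟩
  · intro hbij
    let e := LinearEquiv.ofBijective _ hbij
    exact ⟨P ∘ₗ (e.symm : Module.Dual ℝ V →ₗ[ℝ] Module.Dual ℝ V),
      skew_comp_symm_of_coe_eq_id_add hP hB e rfl,
      map_gaugeMap_range_prod_id_eq_of_coe_eq V P B e rfl⟩
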